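/- An almost assertional logic ⊢ has an algebraic semantics if and only if there exists a set of equations τ(x) such that (i) there is no substitution σ with σ(ε) = σ(δ) for all ε ≈ δ ∈ τ, and (ii) for every ε ≈ δ ∈ τ and formula φ(v, z⃗), x, φ(ε, z⃗) ⊣⊢ φ(δ, z⃗), x. -/

import Mathlib

/-- An algebraic signature: a type of operation symbols with arities. -/
structure Sig : Type 1 where
  Op : Type
  ar : Op → ℕ

/-- Formulas (terms) over a signature, with variables indexed by ℕ. -/
inductive Fm (L : Sig) : Type where
  | var : ℕ → Fm L
  | op : (f : L.Op) → (Fin (L.ar f) → Fm L) → Fm L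

/-- An algebra for the signature `L`. -/
structure Alg (L : Sig) : Type 1 where
  carrier : Type
  interp : (f : L.Op) → (Fin (L.ar f) → carrier) → carrier

/-- Evaluation of a formula in an algebra under a valuation of the variables. -/
def Fm.eval {L : Sig} (A : Alg L) (v : ℕ → A.carrier) : Fm L → A.carrier
  | .var n => v n
  | .op f as => A.interp f (fun i => (as i).eval A v)

/-- Substitution (endomorphism of the formula algebra). -/
def Fm.subst {L : Sig} (σ : ℕ → Fm L) : Fm L → Fm L
  | .var n => σ n
  | .op f as => .op f (fun i => (as i).subst σ)

/-- The set of variables occurring in a formula. -/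
def Fm.vars {L : Sig} : Fm L → Set ℕ
  | .var n => {n}
  | .op _ as => ⋃ i, (as i).vars

/-- Substitute the formula `ψ` for the variable `v` in `φ`. -/
def Fm.subst1 {L : Sig} (v : ℕ) (ψ : Fm L) (φ : Fm L) : Fm L :=
  φ.subst (fun n => if n = v then ψ else .var n)

/-- A logic: a substitution-invariant (finitary or not) consequence relation on formulas. -/
structure Logic (L : Sig) : Type where
  deriv : Set (Fm L) → Fm L → Prop
  axm : ∀ Γ φ, φ ∈ Γ → deriv Γ φ
  mono : ∀ Γ Δ φ, Γ ⊆ Δ → deriv Γ φ → deriv Δ φ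
  cut : ∀ Γ Δ φ, deriv Γ φ → (∀ γ ∈ Γ, deriv Δ γ) → deriv Δ φ
  substInv : ∀ (σ : ℕ → Fm L) Γ φ, deriv Γ φ → deriv (Fm.subst σ '' Γ) (φ.subst σ)

/-- A logical matrix: an algebra with a set of designated elements. -/
structure LMatrix (L : Sig) : Type 1 where
  alg : Alg L
  F : Set alg.carrier

/-- The consequence relation induced by a class of matrices. -/
def inducedBy {L : Sig} (M : Set (LMatrix L)) (Γ : Set (Fm L)) (φ : Fm L) : Prop :=
  ∀ m ∈ M, ∀ v : ℕ → m.alg.carrier,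
    (∀ γ ∈ Γ, γ.eval m.alg v ∈ m.F) → φ.eval m.alg v ∈ m.F

/-- `M` is a matrix semantics for the logic `ℒ`. -/
def IsMatrixSemantics {L : Sig} (ℒ : Logic L) (M : Set (LMatrix L)) : Prop :=
  ∀ Γ φ, ℒ.deriv Γ φ ↔ inducedBy M Γ φ

/-- Equational consequence relative to a class of algebras (equations as pairs of formulas). -/
def eqConseq {L : Sig} (K : Set (Alg L)) (Θ : Set (Fm L × Fm L)) (e : Fm L × Fm L) : Prop :=
  ∀ A ∈ K, ∀ v : ℕ → A.carrier,
    (∀ p ∈ Θ, p.1.eval A v = p.2.eval A v) → e.1.eval A v = e.2.eval A v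

/-- `τ(φ)`: the result of substituting `φ` for the variable `x` (= variable 0) in each
equation of `τ`. -/
def tauApp {L : Sig} (τ : Set (Fm L × Fm L)) (φ : Fm L) : Set (Fm L × Fm L) :=
  (fun e => (Fm.subst1 0 φ e.1, Fm.subst1 0 φ e.2)) '' τ

/-- `τ[Γ]`. -/
def tauAppSet {L : Sig} (τ : Set (Fm L × Fm L)) (Γ : Set (Fm L)) : Set (Fm L × Fm L) :=
  ⋃ γ ∈ Γ, tauApp τ γ

/-- `τ` is a set of equations in the single variable `x` (= variable 0). -/
def IsUnivalent {L : Sig} (τ : Set (Fm L × Fm L)) : Prop :=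
  ∀ e ∈ τ, e.1.vars ⊆ ({0} : Set ℕ) ∧ e.2.vars ⊆ ({0} : Set ℕ)

/-- `K` is a `τ`-algebraic semantics for `ℒ`: `Γ ⊢ φ` iff `τ[Γ] ⊨_K τ(φ)`. -/
def IsTauAlgSem {L : Sig} (ℒ : Logic L) (τ : Set (Fm L × Fm L)) (K : Set (Alg L)) : Prop :=
  IsUnivalent τ ∧ ∀ Γ φ, ℒ.deriv Γ φ ↔ ∀ e ∈ tauApp τ φ, eqConseq K (tauAppSet τ Γ) e

/-- `ℒ` has an algebraic semantics (admits an equational completeness theorem). -/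
def HasAlgSem {L : Sig} (ℒ : Logic L) : Prop :=
  ∃ (τ : Set (Fm L × Fm L)) (K : Set (Alg L)), IsTauAlgSem ℒ τ K

/-- `θ` is a congruence of the algebra `A`. -/
def IsCong {L : Sig} (A : Alg L) (θ : A.carrier → A.carrier → Prop) : Prop :=
  Equivalence θ ∧ ∀ (f : L.Op) (as bs : Fin (L.ar f) → A.carrier),
    (∀ i, θ (as i) (bs i)) → θ (A.interp f as) (A.interp f bs)

/-- The congruence of `A` generated by `X` (least congruence containing `X`). -/
def congGen {L : Sig} (A : Alg L) (X : Set (A.carrier × A.carrier))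
    (a c : A.carrier) : Prop :=
  ∀ θ, IsCong A θ → (∀ p ∈ X, θ p.1 p.2) → θ a c

/-- `p` is a unary polynomial function of `A`: `p(a) = φ^A(a, c⃗)` for a formula `φ(x, y⃗)`
and parameters `c⃗` from `A`. -/
def IsUnaryPoly {L : Sig} (A : Alg L) (p : A.carrier → A.carrier) : Prop :=
  ∃ (φ : Fm L) (c : ℕ → A.carrier),
    ∀ a, p a = φ.eval A (fun n => if n = 0 then a else c n)

/-- Compatibility of a relation with a set. -/
def Compatible {L : Sig} (A : Alg L) (θ : A.carrier → A.carrier → Prop)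
    (F : Set A.carrier) : Prop :=
  ∀ a c, θ a c → a ∈ F → c ∈ F

/-- The Leibniz congruence `Ω^A F`: the largest congruence of `A` compatible with `F`
(realized as the union of all congruences compatible with `F`). -/
def leibniz {L : Sig} (A : Alg L) (F : Set A.carrier) (a c : A.carrier) : Prop :=
  ∃ θ, IsCong A θ ∧ Compatible A θ F ∧ θ a c

/-- The formula algebra. -/
def FmAlg (L : Sig) : Alg L :=
  ⟨Fm L, fun f as => Fm.op f as⟩

/-- `ℒ` has no theorems. -/
def LacksTheorems {L : Sig} (ℒ : Logic L) : Prop :=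
  ¬ ∃ φ, ℒ.deriv ∅ φ

/-- `ℒ` is assertional. -/
def Assertional {L : Sig} (ℒ : Logic L) : Prop :=
  ∃ (M : Set (LMatrix L)) (φ : Fm L), IsMatrixSemantics ℒ M ∧ φ.vars ⊆ ({0} : Set ℕ) ∧
    ∀ m ∈ M, ∃ c : m.alg.carrier,
      (∀ a : m.alg.carrier, φ.eval m.alg (fun _ => a) = c) ∧ m.F = {c}

/-- `ℒ` is almost assertional. -/
def AlmostAssertional {L : Sig} (ℒ : Logic L) : Prop :=
  LacksTheorems ℒ ∧
  ∃ (M : Set (LMatrix L)) (φ : Fm L), IsMatrixSemantics ℒ M ∧ φ.vars ⊆ ({0} : Set ℕ) ∧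
    ∀ m ∈ M, m.F.Nonempty → ∃ c : m.alg.carrier,
      (∀ a : m.alg.carrier, φ.eval m.alg (fun _ => a) = c) ∧ m.F = {c}

/-- Two formulas are logically equivalent in `ℒ`. -/
def LogEquiv {L : Sig} (ℒ : Logic L) (ε δ : Fm L) : Prop :=
  ∀ (φ : Fm L) (v : ℕ),
    ℒ.deriv {Fm.subst1 v ε φ} (Fm.subst1 v δ φ) ∧
    ℒ.deriv {Fm.subst1 v δ φ} (Fm.subst1 v ε φ)

/-!
If `K` is a `τ`-algebraic semantics, the logic is induced by the matrices `⟨A, τ^A⟩` with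
`A ∈ K`. A unifier `σ` of `τ` would then make `σ x` a theorem, and in these matrices the premise
`x` forces `ε = δ` for every `ε ≈ δ ∈ τ`, which gives (ii).

Conversely, let `φ₀(x)` be the constant term witnessing almost assertionality and
`τ' = τ ∪ {x ≈ φ₀}`. Condition (ii) says that `ε(c)` and `δ(c)` are identified by the Leibniz
congruence `Ω` of every matrix `⟨A, {c}⟩` of the semantics, so `τ'` defines `{c / Ω}` in `A / Ω`;
these quotients induce the same consequences as the original matrices from non-empty premise sets.
Adding the formula algebra, in which `τ'` defines `∅` by (i), rules out consequences of `∅`.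
-/

theorem rel_of_forall_rel_update {ι α β : Type*} [Fintype ι] [DecidableEq ι]
    {S : α → α → Prop} {R : β → β → Prop} (hrefl : ∀ b, R b b)
    (htrans : ∀ {a b c}, R a b → R b c → R a c) (g : (ι → α) → β)
    (hg : ∀ (x : ι → α) i a b, S a b → R (g (Function.update x i a)) (g (Function.update x i b)))
    {x y : ι → α} (hxy : ∀ i, S (x i) (y i)) : R (g x) (g y) := by
  suffices ∀ s : Finset ι, R (g x) (g (s.piecewise y x)) by
    simpa using this Finset.univ
  intro s
  induction s using Finset.induction_on with
  | empty => simpa using hrefl (g x)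
  | insert i s hi ih =>
    rw [Finset.piecewise_insert]
    refine htrans ih ?_
    have hx : s.piecewise y x i = x i := Finset.piecewise_eq_of_notMem _ _ _ hi
    have := hg (s.piecewise y x) i (x i) (y i) (hxy i)
    rwa [← hx, Function.update_eq_self] at this

namespace Fm

variable {L : Sig}

theorem eval_congr (A : Alg L) {u w : ℕ → A.carrier} (φ : Fm L)
    (h : ∀ n ∈ φ.vars, u n = w n) : φ.eval A u = φ.eval A w := by
  induction φ with
  | var n => exact h n rfl
  | op f as ih =>
    simp only [Fm.eval]
    congr 1
    funext i
    exact ih i fun n hn => h n (Set.mem_iUnion.2 ⟨i, hn⟩)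

theorem eval_subst (A : Alg L) (σ : ℕ → Fm L) (w : ℕ → A.carrier) (φ : Fm L) :
    (φ.subst σ).eval A w = φ.eval A (fun n => (σ n).eval A w) := by
  induction φ with
  | var n => rfl
  | op f as ih => simp only [Fm.subst, Fm.eval, ih]

theorem eval_subst1 (A : Alg L) (v : ℕ) (ψ φ : Fm L) (w : ℕ → A.carrier) :
    (subst1 v ψ φ).eval A w = φ.eval A (fun n => if n = v then ψ.eval A w else w n) := by
  rw [subst1, eval_subst]
  congr 1
  funext n
  split_ifs <;> rfl

theorem eval_fmAlg (σ : ℕ → Fm L) (φ : Fm L) : φ.eval (FmAlg L) σ = φ.subst σ := by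
  induction φ with
  | var n => rfl
  | op f as ih => simp only [Fm.eval, Fm.subst, ih]; rfl

theorem eval_of_vars_subset_zero (A : Alg L) {ε : Fm L} (hε : ε.vars ⊆ {0})
    (w : ℕ → A.carrier) : ε.eval A w = ε.eval A (fun _ => w 0) :=
  eval_congr A ε fun n hn => by rw [hε hn]

end Fm

open Fm

variable {L : Sig}

section Polynomials

variable {A : Alg L}

theorem IsUnaryPoly.comp {p q : A.carrier → A.carrier} (hp : IsUnaryPoly A p)
    (hq : IsUnaryPoly A q) : IsUnaryPoly A (p ∘ q) := by
  obtain ⟨φ, c, hφ⟩ := hp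
  obtain ⟨ψ, d, hψ⟩ := hq
  -- the parameters of `φ` move to the even variables, those of `ψ` to the odd ones
  refine ⟨φ.subst fun n => if n = 0 then ψ.subst (fun k => if k = 0 then var 0 else var (2 * k + 1))
      else var (2 * n), fun n => if n % 2 = 0 then c (n / 2) else d (n / 2), fun a => ?_⟩
  rw [Function.comp_apply, hφ, hψ, eval_subst]
  congr 1
  funext n
  split_ifs with hn
  · rw [eval_subst]
    congr 1
    funext k
    split_ifs with hk
    · simp [Fm.eval]
    · simp [Fm.eval, hk, Nat.mul_add_div]
  · simp [Fm.eval, hn]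

theorem isUnaryPoly_interp_update (f : L.Op) (cs : Fin (L.ar f) → A.carrier) (i : Fin (L.ar f)) :
    IsUnaryPoly A fun z => A.interp f (Function.update cs i z) := by
  refine ⟨.op f fun j => if j = i then var 0 else var (j + 1),
    fun n => if h : n - 1 < L.ar f then cs ⟨n - 1, h⟩ else cs i, fun z => ?_⟩
  simp only [Fm.eval]
  congr 1
  funext j
  by_cases hj : j = i
  · subst hj
    simp [Fm.eval]
  · simp [Fm.eval, hj]

/-- The Leibniz congruence `Ω^A F`, described through unary polynomial functions. -/
def polyLeibniz (A : Alg L) (F : Set A.carrier) (a b : A.carrier) : Prop :=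
  ∀ p, IsUnaryPoly A p → (p a ∈ F ↔ p b ∈ F)

theorem isCong_polyLeibniz (F : Set A.carrier) : IsCong A (polyLeibniz A F) := by
  have hequiv : Equivalence (polyLeibniz A F) :=
    ⟨fun _ _ _ => Iff.rfl, fun h p hp => (h p hp).symm,
      fun h₁ h₂ p hp => (h₁ p hp).trans (h₂ p hp)⟩
  exact ⟨hequiv, fun f _ _ h => rel_of_forall_rel_update hequiv.refl hequiv.trans (A.interp f)
    (fun cs i _ _ hab p hp => hab _ (hp.comp (isUnaryPoly_interp_update f cs i))) h⟩

theorem compatible_polyLeibniz (F : Set A.carrier) : Compatible A (polyLeibniz A F) F :=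
  fun a _ h ha => (h id ⟨var 0, fun _ => a, fun _ => rfl⟩).1 ha

end Polynomials

section Matrices

theorem inducedBy_insert_empty_iff {M : Set (LMatrix L)} {A : Alg L} (hA : Nonempty A.carrier)
    {Γ : Set (Fm L)} {φ : Fm L} :
    inducedBy (insert ⟨A, ∅⟩ M) Γ φ ↔ Γ.Nonempty ∧ inducedBy M Γ φ := by
  simp only [inducedBy, Set.forall_mem_insert]
  constructor
  · rintro ⟨h₀, h⟩
    refine ⟨Set.nonempty_iff_ne_empty.2 fun hΓ => ?_, h⟩
    subst hΓ
    exact h₀ (fun _ => hA.some) (by simp)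
  · rintro ⟨⟨γ, hγ⟩, h⟩
    exact ⟨fun _ hv => absurd (hv γ hγ) (Set.notMem_empty _), h⟩

theorem inducedBy_sep_nonempty_iff {M : Set (LMatrix L)} {Γ : Set (Fm L)} (hΓ : Γ.Nonempty)
    {φ : Fm L} : inducedBy {m ∈ M | m.F.Nonempty} Γ φ ↔ inducedBy M Γ φ :=
  ⟨fun h m hm v hv => h m ⟨hm, _, hv _ hΓ.some_mem⟩ v hv, fun h m hm => h m hm.1⟩

def Alg.IsHom (A B : Alg L) (π : A.carrier → B.carrier) : Prop :=
  ∀ f as, π (A.interp f as) = B.interp f (π ∘ as)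

theorem Alg.IsHom.eval {A B : Alg L} {π : A.carrier → B.carrier} (hπ : A.IsHom B π)
    (u : ℕ → A.carrier) (ψ : Fm L) : π (ψ.eval A u) = ψ.eval B (π ∘ u) := by
  induction ψ with
  | var n => rfl
  | op f as ih =>
    simp only [Fm.eval]
    rw [hπ]
    congr 1
    funext i
    exact ih i

def LMatrix.IsStrictSurjHom (m m' : LMatrix L) (π : m.alg.carrier → m'.alg.carrier) : Prop :=
  m.alg.IsHom m'.alg π ∧ Function.Surjective π ∧ ∀ a, π a ∈ m'.F ↔ a ∈ m.F

theorem inducedBy_image_iff {M : Set (LMatrix L)} (f : LMatrix L → LMatrix L)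
    (hf : ∀ m ∈ M, ∃ π, m.IsStrictSurjHom (f m) π) {Γ : Set (Fm L)} {φ : Fm L} :
    inducedBy (f '' M) Γ φ ↔ inducedBy M Γ φ := by
  constructor
  · intro h m hm u hu
    obtain ⟨π, hπ, -, hF⟩ := hf m hm
    rw [← hF, hπ.eval]
    exact h _ ⟨m, hm, rfl⟩ (π ∘ u) fun γ hγ => by rw [← hπ.eval, hF]; exact hu γ hγ
  · rintro h _ ⟨m, hm, rfl⟩ w hw
    obtain ⟨π, hπ, hsurj, hF⟩ := hf m hm
    obtain ⟨u, rfl⟩ := hsurj.comp_left w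
    rw [← hπ.eval, hF]
    exact h m hm u fun γ hγ => by rw [← hF, hπ.eval]; exact hw γ hγ

end Matrices

section Quotient

noncomputable def Alg.quotient (A : Alg L) (θ : A.carrier → A.carrier → Prop) : Alg L :=
  ⟨Quot θ, fun f bs => Quot.mk θ (A.interp f fun i => (bs i).out)⟩

theorem Alg.isHom_quotient {A : Alg L} {θ : A.carrier → A.carrier → Prop} (hθ : IsCong A θ) :
    A.IsHom (A.quotient θ) (Quot.mk θ) := fun _ as =>
  Quot.sound <| hθ.2 _ _ _ fun i =>
    (hθ.1.quot_mk_eq_iff _ _).1 (Quot.out_eq (Quot.mk θ (as i))).symm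

noncomputable def leibnizQuotient (m : LMatrix L) : Alg L :=
  m.alg.quotient (polyLeibniz m.alg m.F)

end Quotient

section TauSemantics

/-- `τ^A`, the set of solutions of `τ(x)` in `A`. -/
def tauSet (A : Alg L) (τ : Set (Fm L × Fm L)) : Set A.carrier :=
  {a | ∀ e ∈ τ, e.1.eval A (fun _ => a) = e.2.eval A (fun _ => a)}

def tauMatrices (K : Set (Alg L)) (τ : Set (Fm L × Fm L)) : Set (LMatrix L) :=
  (fun A => ⟨A, tauSet A τ⟩) '' K

def Unifiable (τ : Set (Fm L × Fm L)) : Prop :=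
  ∃ σ : ℕ → Fm L, ∀ e ∈ τ, e.1.subst σ = e.2.subst σ

def LogEquivGivenX (ℒ : Logic L) (ε δ : Fm L) : Prop :=
  ∀ (φ : Fm L) (v : ℕ),
    ℒ.deriv {var 0, subst1 v ε φ} (subst1 v δ φ) ∧ ℒ.deriv {var 0, subst1 v δ φ} (subst1 v ε φ)

variable {ℒ : Logic L} {τ : Set (Fm L × Fm L)} {K : Set (Alg L)}

theorem forall_tauApp_iff_mem_tauSet (hτ : IsUnivalent τ) (A : Alg L) (w : ℕ → A.carrier)
    (χ : Fm L) :
    (∀ e ∈ tauApp τ χ, e.1.eval A w = e.2.eval A w) ↔ χ.eval A w ∈ tauSet A τ := by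
  have hsubst : ∀ ε : Fm L, ε.vars ⊆ {0} →
      (subst1 0 χ ε).eval A w = ε.eval A (fun _ => χ.eval A w) := fun ε hε => by
    rw [eval_subst1, eval_of_vars_subset_zero A hε]
    simp
  simp only [tauApp, Set.forall_mem_image]
  exact forall₂_congr fun e he => by rw [hsubst _ (hτ e he).1, hsubst _ (hτ e he).2]

theorem isTauAlgSem_iff :
    IsTauAlgSem ℒ τ K ↔ IsUnivalent τ ∧ IsMatrixSemantics ℒ (tauMatrices K τ) := by
  refine and_congr_right fun hτ => forall₂_congr fun Γ φ => iff_congr Iff.rfl ?_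
  simp only [eqConseq, inducedBy, tauMatrices, tauAppSet, Set.forall_mem_image, Set.mem_iUnion,
    forall_exists_index]
  have hmem := forall_tauApp_iff_mem_tauSet hτ
  constructor
  · intro h A hA v hv
    exact (hmem A v φ).1 fun e he =>
      h e he A hA v fun p γ hγ hp => (hmem A v γ).2 (hv γ hγ) p hp
  · intro h e he A hA v hv
    exact (hmem A v φ).2 (h hA v fun γ hγ => (hmem A v γ).1 fun p hp => hv p γ hγ hp) e he

theorem LacksTheorems.nonempty_of_deriv (hℒ : LacksTheorems ℒ) {Γ : Set (Fm L)} {φ : Fm L}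
    (h : ℒ.deriv Γ φ) : Γ.Nonempty :=
  Set.nonempty_iff_ne_empty.2 fun hΓ => hℒ ⟨φ, hΓ ▸ h⟩

theorem LacksTheorems.not_unifiable (hℒ : LacksTheorems ℒ) (h : IsTauAlgSem ℒ τ K) :
    ¬ Unifiable τ := by
  rintro ⟨σ, hσ⟩
  rw [isTauAlgSem_iff] at h
  refine hℒ ⟨σ 0, (h.2 ∅ (σ 0)).2 ?_⟩
  rintro _ ⟨A, -, rfl⟩ w -
  intro e he
  have hsubst : ∀ ε : Fm L, ε.vars ⊆ {0} →
      (ε.subst σ).eval A w = ε.eval A (fun _ => (σ 0).eval A w) := fun ε hε => by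
    rw [eval_subst, eval_of_vars_subset_zero A hε]
  rw [← hsubst _ (h.1 e he).1, ← hsubst _ (h.1 e he).2, hσ e he]

theorem IsTauAlgSem.deriv_subst1 (h : IsTauAlgSem ℒ τ K) {ε δ : Fm L} (hε : ε.vars ⊆ {0})
    (hδ : δ.vars ⊆ {0})
    (hεδ : ∀ A ∈ K, ∀ a ∈ tauSet A τ, ε.eval A (fun _ => a) = δ.eval A (fun _ => a))
    (φ : Fm L) (v : ℕ) : ℒ.deriv {var 0, subst1 v ε φ} (subst1 v δ φ) := by
  rw [isTauAlgSem_iff] at h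
  refine (h.2 _ _).2 ?_
  rintro _ ⟨A, hA, rfl⟩ w hw
  have hx : w 0 ∈ tauSet A τ := hw (var 0) (Set.mem_insert _ _)
  have hδε : (subst1 v δ φ).eval A w = (subst1 v ε φ).eval A w := by
    rw [eval_subst1, eval_subst1, eval_of_vars_subset_zero A hε, eval_of_vars_subset_zero A hδ,
      hεδ A hA _ hx]
  rw [hδε]
  exact hw _ (Set.mem_insert_of_mem _ rfl)

theorem IsTauAlgSem.logEquivGivenX (h : IsTauAlgSem ℒ τ K) {e : Fm L × Fm L} (he : e ∈ τ) :
    LogEquivGivenX ℒ e.1 e.2 := fun φ v =>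
  ⟨h.deriv_subst1 (h.1 e he).1 (h.1 e he).2 (fun _ _ _ ha => ha e he) φ v,
    h.deriv_subst1 (h.1 e he).2 (h.1 e he).1 (fun _ _ _ ha => (ha e he).symm) φ v⟩

theorem tauSet_fmAlg_eq_empty (h : ¬ Unifiable τ) : tauSet (FmAlg L) τ = ∅ :=
  Set.eq_empty_of_forall_notMem fun (a : Fm L) ha =>
    h ⟨fun _ => a, fun e he => by rw [← eval_fmAlg, ← eval_fmAlg]; exact ha e he⟩

variable {M : Set (LMatrix L)} {m : LMatrix L}

theorem polyLeibniz_of_logEquivGivenX (hMS : IsMatrixSemantics ℒ M) (hm : m ∈ M)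
    {c : m.alg.carrier} (hc : c ∈ m.F) {ε δ : Fm L} (hε : ε.vars ⊆ {0}) (hδ : δ.vars ⊆ {0})
    (h : LogEquivGivenX ℒ ε δ) :
    polyLeibniz m.alg m.F (ε.eval m.alg fun _ => c) (δ.eval m.alg fun _ => c) := by
  rintro p ⟨ψ, d, hψ⟩
  have hp : ∀ χ : Fm L, χ.vars ⊆ {0} → p (χ.eval m.alg fun _ => c) =
      (subst1 0 χ ψ).eval m.alg (fun n => if n = 0 then c else d n) := fun χ hχ => by
    rw [hψ, eval_subst1]
    congr 1
    funext n
    split_ifs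
    · exact (eval_of_vars_subset_zero m.alg hχ (fun n => if n = 0 then c else d n)).symm
    · rfl
  rw [hp ε hε, hp δ hδ]
  have hx : (var 0).eval m.alg (fun n => if n = 0 then c else d n) ∈ m.F := hc
  constructor
  · intro hεψ
    exact (hMS _ _).1 (h ψ 0).1 m hm _ (by rintro γ (rfl | rfl); exacts [hx, hεψ])
  · intro hδψ
    exact (hMS _ _).1 (h ψ 0).2 m hm _ (by rintro γ (rfl | rfl); exacts [hx, hδψ])

theorem isStrictSurjHom_leibnizQuotient (hMS : IsMatrixSemantics ℒ M) (hm : m ∈ M)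
    {φ₀ : Fm L} {c : m.alg.carrier} (hφ₀ : ∀ a, φ₀.eval m.alg (fun _ => a) = c)
    (hF : m.F = {c}) (hτ : IsUnivalent τ) (hder : ∀ e ∈ τ, LogEquivGivenX ℒ e.1 e.2) :
    m.IsStrictSurjHom ⟨leibnizQuotient m, tauSet (leibnizQuotient m) (insert (var 0, φ₀) τ)⟩
      (Quot.mk _) := by
  have hΩ := isCong_polyLeibniz m.F
  have hπ := Alg.isHom_quotient hΩ
  refine ⟨hπ, Quot.mk_surjective, fun a => ?_⟩
  have hval : ∀ ψ : Fm L, ψ.eval (leibnizQuotient m) (fun _ => Quot.mk _ a) =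
      Quot.mk _ (ψ.eval m.alg fun _ => a) := fun ψ => (hπ.eval _ ψ).symm
  have hc : c ∈ m.F := hF ▸ Set.mem_singleton c
  show (∀ e ∈ insert (var 0, φ₀) τ,
    e.1.eval (leibnizQuotient m) (fun _ => Quot.mk (polyLeibniz m.alg m.F) a) =
      e.2.eval (leibnizQuotient m) (fun _ => Quot.mk (polyLeibniz m.alg m.F) a)) ↔ a ∈ m.F
  simp only [Set.forall_mem_insert, hval, hφ₀, Fm.eval]
  constructor
  · rintro ⟨hac, -⟩
    exact compatible_polyLeibniz m.F c a ((hΩ.1.quot_mk_eq_iff _ _).1 hac.symm) hc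
  · intro ha
    obtain rfl : a = c := by rwa [hF] at ha
    exact ⟨rfl, fun e he => Quot.sound <|
      polyLeibniz_of_logEquivGivenX hMS hm hc (hτ e he).1 (hτ e he).2 (hder e he)⟩

theorem isTauAlgSem_insert_leibnizQuotients (hℒ : LacksTheorems ℒ) (hMS : IsMatrixSemantics ℒ M)
    {φ₀ : Fm L} (hφ₀ : φ₀.vars ⊆ {0})
    (hM : ∀ m ∈ M, m.F.Nonempty → ∃ c : m.alg.carrier,
      (∀ a : m.alg.carrier, φ₀.eval m.alg (fun _ => a) = c) ∧ m.F = {c})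
    (hτ : IsUnivalent τ) (hunif : ¬ Unifiable τ) (hder : ∀ e ∈ τ, LogEquivGivenX ℒ e.1 e.2) :
    IsTauAlgSem ℒ (insert (var 0, φ₀) τ)
      (insert (FmAlg L) (leibnizQuotient '' {m ∈ M | m.F.Nonempty})) := by
  have hunif' : ¬ Unifiable (insert (var 0, φ₀) τ) :=
    fun ⟨σ, hσ⟩ => hunif ⟨σ, fun e he => hσ e (Set.mem_insert_of_mem _ he)⟩
  have hstrict : ∀ m ∈ {m ∈ M | m.F.Nonempty}, ∃ π, m.IsStrictSurjHom
      ⟨leibnizQuotient m, tauSet (leibnizQuotient m) (insert (var 0, φ₀) τ)⟩ π := by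
    rintro m ⟨hm, hne⟩
    obtain ⟨c, hc, hF⟩ := hM m hm hne
    exact ⟨_, isStrictSurjHom_leibnizQuotient hMS hm hc hF hτ hder⟩
  simp only [isTauAlgSem_iff, tauMatrices, Set.image_insert_eq, Set.image_image,
    tauSet_fmAlg_eq_empty hunif']
  refine ⟨?_, fun Γ φ => ?_⟩
  · rintro e (rfl | he)
    exacts [⟨fun _ h => h, hφ₀⟩, hτ e he]
  rw [inducedBy_insert_empty_iff ⟨var 0⟩, inducedBy_image_iff _ hstrict]
  exact ⟨fun h => ⟨hℒ.nonempty_of_deriv h,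
      (inducedBy_sep_nonempty_iff (hℒ.nonempty_of_deriv h)).2 ((hMS Γ φ).1 h)⟩,
    fun ⟨hΓ, h⟩ => (hMS Γ φ).2 ((inducedBy_sep_nonempty_iff hΓ).1 h)⟩

end TauSemantics

/-- An almost assertional logic has an algebraic semantics iff there is a set of equations
`τ(x)` such that (i) no substitution unifies all equations of `τ`, and (ii)
`x, φ(ε, z⃗) ⊣⊢ φ(δ, z⃗), x` for all `ε ≈ δ ∈ τ` and formulas `φ(v, z⃗)`. -/
theorem almost_assertional_alg_sem_iff {L : Sig} (ℒ : Logic L)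
    (h : AlmostAssertional ℒ) :
    HasAlgSem ℒ ↔
      ∃ τ : Set (Fm L × Fm L), IsUnivalent τ ∧
        (¬ ∃ σ : ℕ → Fm L, ∀ e ∈ τ, e.1.subst σ = e.2.subst σ) ∧
        (∀ e ∈ τ, ∀ (φ : Fm L) (v : ℕ),
          ℒ.deriv {Fm.var 0, Fm.subst1 v e.1 φ} (Fm.subst1 v e.2 φ) ∧
          ℒ.deriv {Fm.var 0, Fm.subst1 v e.2 φ} (Fm.subst1 v e.1 φ)) := by
  obtain ⟨hℒ, M, φ₀, hMS, hφ₀, hM⟩ := h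
  constructor
  · rintro ⟨τ, K, hK⟩
    exact ⟨τ, hK.1, hℒ.not_unifiable hK, fun e he => hK.logEquivGivenX he⟩
  · rintro ⟨τ, hτ, hunif, hder⟩
    exact ⟨_, _, isTauAlgSem_insert_leibnizQuotients hℒ hMS hφ₀ hM hτ hunif hder⟩
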